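/- Let p ≥ 2 and let X be a real Banach space whose norm is uniformly smooth and uniformly convex with modulus of convexity of power type p. Let f : X → ℝ be uniformly continuous on X (not necessarily bounded below). Then Δ_n^p f → f uniformly on X as n → ∞. -/

import Mathlib

/-!
Power-type uniform convexity makes the kernel coercive, `K_p(x, y) ≥ c ‖x - y‖ ^ p`; hence
`2 ^ (p - 1) ‖·‖ ^ p` lies above each of its (Hahn–Banach) subgradients at `x` by at least
`c ‖· - x‖ ^ p`. A uniformly continuous `f` satisfies `f u - f v ≤ a + b ‖u - v‖` for any `a > 0`
and some `b`, and once `n c t ^ p ≥ b t - a` for all `t ≥ 0`, coercivity gives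
`f - 2a + 2 ^ (p - 1) n ‖·‖ ^ p ≤ g_n^p ≤ f + 2 ^ (p - 1) n ‖·‖ ^ p`, while the subgradient bound
produces at every `x` an affine minorant of `g_n^p` with value `f x - 4a + 2 ^ (p - 1) n ‖x‖ ^ p`
at `x`. The convex envelope is squeezed between that minorant and `g_n^p`, so
`|Δ_n^p f - f| ≤ 4a`.
-/

open scoped BigOperators

/-- The convex envelope of a function `h : X → ℝ`, given by the infimum over all
finite convex combinations. -/
noncomputable def convEnv {X : Type*} [NormedAddCommGroup X] [NormedSpace ℝ X]
    (h : X → ℝ) (x : X) : ℝ :=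
  sInf { r : ℝ | ∃ (m : ℕ) (l : Fin m → ℝ) (z : Fin m → X),
    (∀ i, 0 < l i) ∧ ∑ i, l i = 1 ∧ ∑ i, l i • z i = x ∧ ∑ i, l i * h (z i) = r }

/-- The kernel `K_p(x,y) = 2^(p-1)‖x‖^p + 2^(p-1)‖y‖^p - ‖x+y‖^p`. -/
noncomputable def Kp {X : Type*} [NormedAddCommGroup X] (p : ℝ) (x y : X) : ℝ :=
  2 ^ (p - 1) * ‖x‖ ^ p + 2 ^ (p - 1) * ‖y‖ ^ p - ‖x + y‖ ^ p

/-- `g_n^p(x) = inf_y (f(y) + n K_p(x,y)) + 2^(p-1) n ‖x‖^p` for real-valued `f`. -/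
noncomputable def gnpR {X : Type*} [NormedAddCommGroup X] (p : ℝ) (f : X → ℝ)
    (n : ℕ) (x : X) : ℝ :=
  (⨅ y, f y + (n : ℝ) * Kp p x y) + 2 ^ (p - 1) * (n : ℝ) * ‖x‖ ^ p

/-- `Δ_n^p f = co(g_n^p) - 2^(p-1) n ‖·‖^p` for real-valued `f`. -/
noncomputable def DeltaR {X : Type*} [NormedAddCommGroup X] [NormedSpace ℝ X]
    (p : ℝ) (f : X → ℝ) (n : ℕ) (x : X) : ℝ :=
  convEnv (gnpR p f n) x - 2 ^ (p - 1) * (n : ℝ) * ‖x‖ ^ p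

open Filter Set

lemma rpow_add_mul_sub_le_rpow {p s t : ℝ} (hp : 1 ≤ p) (hs : 0 ≤ s) (ht : 0 ≤ t) :
    s ^ p + p * s ^ (p - 1) * (t - s) ≤ t ^ p := by
  have hp0 : 0 < p := by linarith
  have young := Real.geom_mean_le_arith_mean2_weighted (w₁ := (p - 1) / p) (w₂ := 1 / p)
    (div_nonneg (by linarith) hp0.le) (by positivity)
    (Real.rpow_nonneg hs p) (Real.rpow_nonneg ht p) (by field_simp; ring)
  rw [← Real.rpow_mul hs, ← Real.rpow_mul ht, mul_div_cancel₀ _ hp0.ne',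
    mul_one_div_cancel hp0.ne', Real.rpow_one] at young
  have hsp : s ^ p = s ^ (p - 1) * s := by
    rw [← Real.rpow_add_one' hs (by linarith), sub_add_cancel]
  rw [hsp] at young ⊢
  field_simp at young
  linarith

lemma two_mul_rpow_add_rpow_le {p u v : ℝ} (hp : 2 ≤ p) (hv : 0 ≤ v) (hvu : v ≤ u) :
    2 * (u ^ p + v ^ p) ≤ (u + v) ^ p + (u - v) ^ p := by
  have hq : 1 ≤ p / 2 := by linarith
  have sq_rpow : ∀ w : ℝ, 0 ≤ w → (w ^ 2) ^ (p / 2) = w ^ p := fun w hw => by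
    rw [← Real.rpow_natCast, ← Real.rpow_mul hw]; congr 1; push_cast; ring
  have superadd : u ^ p + v ^ p ≤ (u ^ 2 + v ^ 2) ^ (p / 2) := by
    rw [← sq_rpow u (hv.trans hvu), ← sq_rpow v hv]
    exact Real.add_rpow_le_rpow_add (by positivity) (by positivity) hq
  have midpoint := (convexOn_rpow hq).2 (mem_Ici.2 (sq_nonneg (u + v)))
    (mem_Ici.2 (sq_nonneg (u - v))) (by norm_num : (0 : ℝ) ≤ 1 / 2)
    (by norm_num : (0 : ℝ) ≤ 1 / 2) (by norm_num)
  simp only [smul_eq_mul] at midpoint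
  rw [sq_rpow _ (by linarith), sq_rpow _ (by linarith),
    show 1 / 2 * (u + v) ^ 2 + 1 / 2 * (u - v) ^ 2 = u ^ 2 + v ^ 2 by ring] at midpoint
  linarith

lemma add_rpow_add_sub_rpow_le {p a b : ℝ} (hp : 2 ≤ p) (hb : 0 ≤ b) (hba : b ≤ a) :
    (a + b) ^ p + (a - b) ^ p ≤ 2 ^ (p - 1) * (a ^ p + b ^ p) := by
  have h := two_mul_rpow_add_rpow_le hp (v := (a - b) / 2) (u := (a + b) / 2)
    (by linarith) (by linarith)
  rw [show (a + b) / 2 + (a - b) / 2 = a by ring, show (a + b) / 2 - (a - b) / 2 = b by ring,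
    Real.div_rpow (by linarith) zero_le_two, Real.div_rpow (by linarith) zero_le_two] at h
  rw [Real.rpow_sub_one two_ne_zero]
  have h2 : (0 : ℝ) < 2 ^ p := by positivity
  field_simp at h ⊢
  linarith

lemma rpow_sub_one_mul_sub_le_rpow_sub_rpow {p s A : ℝ} (hp : 1 ≤ p) (hs : 0 ≤ s) (hsA : s ≤ A) :
    A ^ (p - 1) * (A - s) ≤ A ^ p - s ^ p := by
  have hpow : ∀ w : ℝ, 0 ≤ w → w ^ p = w ^ (p - 1) * w := fun w hw => by
    rw [← Real.rpow_add_one' hw (by linarith), sub_add_cancel]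
  rw [hpow A (hs.trans hsA), hpow s hs]
  have := mul_le_mul_of_nonneg_right (Real.rpow_le_rpow hs hsA (by linarith : 0 ≤ p - 1)) hs
  linarith

lemma mul_le_mul_rpow_add_mul {p κ b s t : ℝ} (hp : 1 ≤ p) (hκ : 0 ≤ κ) (hb : 0 ≤ b)
    (hs : 0 ≤ s) (ht : 0 ≤ t) (h : b ≤ κ * s ^ (p - 1)) : b * t ≤ κ * t ^ p + b * s := by
  rcases le_total t s with hts | hst
  · linarith [mul_nonneg hκ (Real.rpow_nonneg ht p), mul_le_mul_of_nonneg_left hts hb]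
  · calc b * t ≤ κ * s ^ (p - 1) * t := mul_le_mul_of_nonneg_right h ht
      _ ≤ κ * t ^ (p - 1) * t := by gcongr
      _ = κ * t ^ p := by rw [mul_assoc, ← Real.rpow_add_one' ht (by linarith), sub_add_cancel]
      _ ≤ κ * t ^ p + b * s := le_add_of_nonneg_right (mul_nonneg hb hs)

lemma eventually_mul_le_natCast_mul_rpow_add {p a b c : ℝ} (hp : 1 ≤ p) (ha : 0 < a)
    (hb : 0 < b) (hc : 0 < c) :
    ∀ᶠ n : ℕ in atTop, ∀ t, 0 ≤ t → b * t ≤ n * c * t ^ p + a := by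
  have hlarge := (tendsto_natCast_atTop_atTop.atTop_mul_const
    (by positivity : 0 < c * (a / b) ^ (p - 1))).eventually_ge_atTop b
  filter_upwards [hlarge] with n hn t ht
  have key := mul_le_mul_rpow_add_mul (κ := n * c) (s := a / b) hp (by positivity) hb.le
    (by positivity) ht (by rw [mul_assoc]; exact hn)
  rwa [mul_div_cancel₀ _ hb.ne'] at key

theorem UniformContinuous.exists_dist_le_add_mul_dist {E α : Type*} [SeminormedAddCommGroup E]
    [NormedSpace ℝ E] [PseudoMetricSpace α] {f : E → α} (hf : UniformContinuous f) {a : ℝ}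
    (ha : 0 < a) : ∃ b > 0, ∀ u v, dist (f u) (f v) ≤ a + b * dist u v := by
  obtain ⟨δ, hδ, hfδ⟩ := Metric.uniformContinuous_iff.1 hf a ha
  refine ⟨a / δ, by positivity, fun u v => ?_⟩
  set N : ℕ := ⌊dist u v / δ⌋₊ + 1
  have hN : dist u v / δ < N := by simpa [N] using Nat.lt_floor_add_one (dist u v / δ)
  have hN0 : (0 : ℝ) < N := by positivity
  let w : ℕ → E := fun k => AffineMap.lineMap u v ((k : ℝ) / N)
  have hstep : ∀ k, dist (f (w k)) (f (w (k + 1))) ≤ a := fun k => by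
    refine (hfδ ?_).le
    rw [dist_lineMap_lineMap, Real.dist_eq, Nat.cast_succ k, ← sub_div, sub_add_cancel_left,
      abs_div, abs_neg, abs_one, abs_of_pos hN0, one_div_mul_eq_div, div_lt_iff₀ hN0]
    rwa [div_lt_iff₀ hδ, mul_comm] at hN
  calc dist (f u) (f v) = dist (f (w 0)) (f (w N)) := by simp [w, hN0.ne']
    _ ≤ ∑ k ∈ Finset.range N, dist (f (w k)) (f (w (k + 1))) :=
        dist_le_range_sum_dist (fun k => f (w k)) N
    _ ≤ N * a := (Finset.sum_le_sum fun k _ => hstep k).trans_eq (by simp)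
    _ ≤ (dist u v / δ + 1) * a := by
        gcongr
        simpa [N] using Nat.floor_le (by positivity : 0 ≤ dist u v / δ)
    _ = a + a / δ * dist u v := by ring

def HasPowerTypeModulusOfConvexity (X : Type*) [NormedAddCommGroup X] (C p : ℝ) : Prop :=
  ∀ ε : ℝ, 0 < ε → ε ≤ 2 → ∀ x y : X, ‖x‖ = 1 → ‖y‖ = 1 → ε ≤ ‖x - y‖ →
    C * ε ^ p ≤ 1 - ‖x + y‖ / 2

section Kernel

variable {X : Type*} [NormedAddCommGroup X] {p : ℝ}

lemma Kp_comm (p : ℝ) (x y : X) : Kp p x y = Kp p y x := by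
  unfold Kp; rw [add_comm x y]; ring

lemma Kp_self [NormedSpace ℝ X] (p : ℝ) (z : X) : Kp p z z = 0 := by
  unfold Kp
  rw [← two_smul ℝ z, norm_smul, Real.norm_two, Real.mul_rpow zero_le_two (norm_nonneg z),
    Real.rpow_sub_one two_ne_zero]
  ring

lemma mul_norm_sub_rpow_le_of_norm_eq [NormedSpace ℝ X] {C : ℝ} (hp : 0 < p)
    (hC : HasPowerTypeModulusOfConvexity X C p) {u v : X} {r : ℝ} (hu : ‖u‖ = r)
    (hv : ‖v‖ = r) : 2 * C * ‖u - v‖ ^ p ≤ r ^ (p - 1) * (2 * r - ‖u + v‖) := by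
  rcases eq_or_ne u v with rfl | huv
  · rw [sub_self, norm_zero, Real.zero_rpow hp.ne', ← two_smul ℝ u, norm_smul, hu]
    norm_num
  have hd : 0 < ‖u - v‖ := norm_pos_iff.2 (sub_ne_zero.2 huv)
  have hr : 0 < r := by
    have := norm_sub_le u v
    linarith [norm_nonneg u]
  have hunit : ∀ w : X, ‖w‖ = r → ‖r⁻¹ • w‖ = 1 := fun w hw => by
    rw [norm_smul, hw, norm_inv, Real.norm_of_nonneg hr.le, inv_mul_cancel₀ hr.ne']
  have hscale : ∀ w : X, ‖r⁻¹ • w‖ = ‖w‖ / r := fun w => by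
    rw [norm_smul, norm_inv, Real.norm_of_nonneg hr.le, inv_mul_eq_div]
  have key := hC (‖u - v‖ / r) (by positivity)
    (by rw [div_le_iff₀ hr]; linarith [norm_sub_le u v]) _ _ (hunit u hu) (hunit v hv)
    (by rw [← smul_sub, hscale])
  rw [← smul_add, hscale, Real.div_rpow hd.le hr.le] at key
  have hrp : r ^ p = r ^ (p - 1) * r := by
    rw [← Real.rpow_add_one hr.ne', sub_add_cancel]
  rw [hrp] at key
  have hrp1 : 0 < r ^ (p - 1) := by positivity
  field_simp at key
  linarith

theorem exists_mul_norm_sub_rpow_le_Kp [NormedSpace ℝ X] {C : ℝ} (hp : 2 ≤ p) (hC0 : 0 < C)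
    (hC : HasPowerTypeModulusOfConvexity X C p) :
    ∃ c > 0, ∀ x y : X, c * ‖x - y‖ ^ p ≤ Kp p x y := by
  have hp0 : 0 < p := by linarith
  set c := min ((1 / 4) ^ p) (2 * C * (3 / 4) ^ p)
  refine ⟨c, by positivity, ?_⟩
  suffices H : ∀ x y : X, ‖y‖ ≤ ‖x‖ → c * ‖x - y‖ ^ p ≤ Kp p x y by
    intro x y
    rcases le_total ‖y‖ ‖x‖ with h | h
    · exact H x y h
    · rw [norm_sub_rev, Kp_comm]; exact H y x h
  intro x y hyx
  set a := ‖x‖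
  set b := ‖y‖
  set d := ‖x - y‖
  have hb : 0 ≤ b := norm_nonneg y
  have hsum : ‖x + y‖ ^ p ≤ (a + b) ^ p :=
    Real.rpow_le_rpow (norm_nonneg _) (norm_add_le x y) hp0.le
  have hKp : (a + b) ^ p - ‖x + y‖ ^ p + (a - b) ^ p ≤ Kp p x y := by
    have := add_rpow_add_sub_rpow_le hp hb hyx
    unfold Kp
    linarith
  have hab : 0 ≤ (a - b) ^ p := Real.rpow_nonneg (by linarith) p
  by_cases hcase : d ≤ 4 * (a - b)
  · calc c * d ^ p ≤ (1 / 4) ^ p * d ^ p := by gcongr; exact min_le_left _ _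
      _ = (d / 4) ^ p := by rw [← Real.mul_rpow (by norm_num) (norm_nonneg _)]; congr 1; ring
      _ ≤ (a - b) ^ p := Real.rpow_le_rpow (by positivity) (by linarith) hp0.le
      _ ≤ Kp p x y := by linarith
  · -- move `x` radially onto the sphere of radius `b` and apply the modulus there
    push Not at hcase
    have hd : d ≤ a + b := norm_sub_le x y
    have ha : 0 < a := by linarith
    set x' := (b / a) • x
    have hx' : ‖x'‖ = b := by
      rw [norm_smul, Real.norm_of_nonneg (by positivity), div_mul_cancel₀ _ ha.ne']
    have hxx' : ‖x - x'‖ = a - b := by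
      rw [show x - x' = (1 - b / a) • x by simp [x', sub_smul], norm_smul,
        Real.norm_of_nonneg (by rw [sub_nonneg]; exact div_le_one_of_le₀ hyx ha.le), sub_mul,
        div_mul_cancel₀ _ ha.ne', one_mul]
    have hx'y : 3 / 4 * d ≤ ‖x' - y‖ := by
      have := norm_sub_le_norm_sub_add_norm_sub x x' y
      linarith
    have hxy : ‖x + y‖ ≤ ‖x' + y‖ + (a - b) := by
      rw [← hxx']
      calc ‖x + y‖ = ‖(x' + y) + (x - x')‖ := by congr 1; abel
        _ ≤ _ := norm_add_le _ _
    have hx'y_sum : ‖x' + y‖ ≤ 2 * b := by linarith [norm_add_le x' y]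
    have hpow : b ^ (p - 1) ≤ (a + b) ^ (p - 1) := Real.rpow_le_rpow hb (by linarith) (by linarith)
    calc c * d ^ p ≤ 2 * C * (3 / 4) ^ p * d ^ p := by gcongr; exact min_le_right _ _
      _ = 2 * C * (3 / 4 * d) ^ p := by rw [Real.mul_rpow (by norm_num) (norm_nonneg _)]; ring
      _ ≤ 2 * C * ‖x' - y‖ ^ p := by gcongr
      _ ≤ b ^ (p - 1) * (2 * b - ‖x' + y‖) :=
          mul_norm_sub_rpow_le_of_norm_eq hp0 hC hx' rfl
      _ ≤ (a + b) ^ (p - 1) * (a + b - ‖x + y‖) :=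
          mul_le_mul hpow (by linarith) (by linarith) (by positivity)
      _ ≤ (a + b) ^ p - ‖x + y‖ ^ p :=
          rpow_sub_one_mul_sub_le_rpow_sub_rpow (by linarith) (norm_nonneg _) (norm_add_le x y)
      _ ≤ Kp p x y := by linarith

end Kernel

section Envelope

variable {X : Type*} [NormedAddCommGroup X] [NormedSpace ℝ X] {p : ℝ}

lemma exists_subgradient_norm_rpow (hp : 1 ≤ p) (x : X) :
    ∃ g : X →L[ℝ] ℝ, ∀ w, ‖x‖ ^ p + g (w - x) ≤ ‖w‖ ^ p := by
  rcases eq_or_ne x 0 with rfl | hx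
  · refine ⟨0, fun w => ?_⟩
    rw [norm_zero, Real.zero_rpow (by linarith), zero_apply, add_zero]
    exact Real.rpow_nonneg (norm_nonneg w) p
  obtain ⟨g, hg, hgx⟩ := exists_dual_vector ℝ x (norm_ne_zero_iff.2 hx)
  refine ⟨(p * ‖x‖ ^ (p - 1)) • g, fun w => ?_⟩
  have hgw : g w ≤ ‖w‖ := (le_abs_self _).trans (by simpa [hg] using g.le_opNorm w)
  have hcoef : 0 ≤ p * ‖x‖ ^ (p - 1) := by positivity
  rw [smul_apply, map_sub, hgx, smul_eq_mul, RCLike.ofReal_real_eq_id, id]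
  linarith [rpow_add_mul_sub_le_rpow hp (norm_nonneg x) (norm_nonneg w),
    mul_le_mul_of_nonneg_left hgw hcoef]

lemma exists_subgradient_add_le_of_le_Kp (hp : 1 ≤ p) {c : ℝ}
    (hK : ∀ u w : X, c * ‖u - w‖ ^ p ≤ Kp p u w) (x : X) :
    ∃ g : X →L[ℝ] ℝ, ∀ w,
      2 ^ (p - 1) * ‖x‖ ^ p + g (w - x) + c * ‖w - x‖ ^ p ≤ 2 ^ (p - 1) * ‖w‖ ^ p := by
  obtain ⟨g, hg⟩ := exists_subgradient_norm_rpow hp x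
  refine ⟨(2 : ℝ) ^ (p - 1) • g, fun w => ?_⟩
  -- the subgradient inequality at the midpoint `m` bounds `‖x + w‖ ^ p = 2 ^ p * ‖m‖ ^ p` below
  set m : X := (2⁻¹ : ℝ) • (x + w)
  have hm : ‖x + w‖ ^ p = 2 * 2 ^ (p - 1) * ‖m‖ ^ p := by
    rw [norm_smul, Real.mul_rpow (by norm_num) (norm_nonneg _), Real.rpow_sub_one two_ne_zero,
      Real.norm_of_nonneg (by norm_num), Real.inv_rpow zero_le_two]
    field_simp
  have hgm := hg m
  rw [show m - x = (2⁻¹ : ℝ) • (w - x) by simp only [m]; module, map_smul, smul_eq_mul] at hgm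
  have hKxw := hK x w
  rw [norm_sub_rev] at hKxw
  unfold Kp at hKxw
  rw [smul_apply, smul_eq_mul]
  have h2 : (0 : ℝ) < 2 ^ (p - 1) := by positivity
  linarith [mul_le_mul_of_nonneg_left hgm h2.le]

lemma convEnv_mem_Icc {h ψ : X → ℝ} (hψ : ConvexOn ℝ univ ψ) (hψh : ∀ z, ψ z ≤ h z) (x : X) :
    convEnv h x ∈ Icc (ψ x) (h x) := by
  unfold convEnv
  set S := {r : ℝ | ∃ (m : ℕ) (l : Fin m → ℝ) (z : Fin m → X),
    (∀ i, 0 < l i) ∧ ∑ i, l i = 1 ∧ ∑ i, l i • z i = x ∧ ∑ i, l i * h (z i) = r}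
  have hlow : ∀ r ∈ S, ψ x ≤ r := by
    rintro _ ⟨m, l, z, hl, hl1, rfl, rfl⟩
    calc ψ (∑ i, l i • z i) ≤ ∑ i, l i • ψ (z i) :=
          hψ.map_sum_le (fun i _ => (hl i).le) hl1 (fun _ _ => mem_univ _)
      _ ≤ ∑ i, l i * h (z i) :=
          Finset.sum_le_sum fun i _ => mul_le_mul_of_nonneg_left (hψh _) (hl i).le
  have hmem : h x ∈ S := ⟨1, fun _ => 1, fun _ => x, by simp⟩
  exact ⟨le_csInf ⟨_, hmem⟩ hlow, csInf_le ⟨_, hlow⟩ hmem⟩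

lemma gnpR_mem_Icc {f : X → ℝ} {n : ℕ} {z : X} {m : ℝ} (hm : ∀ y, m ≤ f y + n * Kp p z y) :
    gnpR p f n z ∈ Icc (m + 2 ^ (p - 1) * n * ‖z‖ ^ p) (f z + 2 ^ (p - 1) * n * ‖z‖ ^ p) := by
  have hz := ciInf_le ⟨m, by rintro _ ⟨y, rfl⟩; exact hm y⟩ z
  rw [Kp_self, mul_zero, add_zero] at hz
  unfold gnpR
  exact ⟨by linarith [le_ciInf hm], by linarith⟩

lemma dist_DeltaR_le (hp : 1 ≤ p) {f : X → ℝ} {a b c : ℝ} {n : ℕ}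
    (hK : ∀ u w : X, c * ‖u - w‖ ^ p ≤ Kp p u w)
    (hf : ∀ u v, dist (f u) (f v) ≤ a + b * dist u v)
    (hn : ∀ t, 0 ≤ t → b * t ≤ n * c * t ^ p + a) (x : X) :
    dist (f x) (DeltaR p f n x) ≤ 4 * a := by
  have hf' : ∀ u v, f u - f v ≤ a + b * ‖u - v‖ := fun u v => by
    rw [← dist_eq_norm]; exact (le_abs_self _).trans (hf u v)
  have hn' : ∀ u v : X, b * ‖u - v‖ ≤ n * (c * ‖u - v‖ ^ p) + a := fun u v => by
    rw [← mul_assoc]; exact hn _ (norm_nonneg _)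
  have hg : ∀ z, gnpR p f n z ∈
      Icc (f z - 2 * a + 2 ^ (p - 1) * n * ‖z‖ ^ p) (f z + 2 ^ (p - 1) * n * ‖z‖ ^ p) :=
    fun z => gnpR_mem_Icc fun y => by
      linarith [hf' z y, hn' z y, mul_le_mul_of_nonneg_left (hK z y) n.cast_nonneg]
  obtain ⟨g, hsub⟩ := exists_subgradient_add_le_of_le_Kp hp hK x
  set α := f x - 4 * a + 2 ^ (p - 1) * n * ‖x‖ ^ p with hα
  have hψ : ConvexOn ℝ univ fun z => α + (n • g) (z - x) := by
    have hψ_eq : (fun z => α + (n • g) (z - x)) = fun z => (n • g) z + (α - (n • g) x) := by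
      funext z; rw [map_sub]; ring
    exact hψ_eq ▸ ((n • g).toLinearMap.convexOn convex_univ).add_const _
  have hψg : ∀ z, α + (n • g) (z - x) ≤ gnpR p f n z := fun z => by
    have hfxz := hf' x z
    rw [norm_sub_rev] at hfxz
    rw [smul_apply, nsmul_eq_mul, hα]
    linarith [(hg z).1, hn' z x, mul_le_mul_of_nonneg_left (hsub z) n.cast_nonneg]
  have henv := convEnv_mem_Icc hψ hψg x
  simp only [sub_self, map_zero, add_zero] at henv
  unfold DeltaR
  rw [Real.dist_eq, abs_le]
  constructor <;> linarith [henv.1, henv.2, (hg x).2]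

end Envelope

theorem stmt_4_general {X : Type*} [NormedAddCommGroup X] [NormedSpace ℝ X]
    (p : ℝ) (hp : 2 ≤ p)
    (hconv : ∃ C : ℝ, 0 < C ∧ ∀ ε : ℝ, 0 < ε → ε ≤ 2 →
      ∀ x y : X, ‖x‖ = 1 → ‖y‖ = 1 → ε ≤ ‖x - y‖ → C * ε ^ p ≤ 1 - ‖x + y‖ / 2)
    (f : X → ℝ)
    (hu : UniformContinuous f) :
    TendstoUniformly (fun (n : ℕ) (x : X) => DeltaR p f n x) f Filter.atTop := by
  obtain ⟨C, hC0, hC⟩ := hconv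
  obtain ⟨c, hc, hK⟩ := exists_mul_norm_sub_rpow_le_Kp hp hC0 hC
  rw [Metric.tendstoUniformly_iff]
  intro η hη
  obtain ⟨b, hb, hf⟩ := hu.exists_dist_le_add_mul_dist (a := η / 8) (by positivity)
  filter_upwards [eventually_mul_le_natCast_mul_rpow_add (p := p) (a := η / 8) (by linarith)
    (by positivity) hb hc] with n hn x
  exact (dist_DeltaR_le (by linarith) hK hf hn x).trans_lt (by linarith)

/-- Let `p ≥ 2`, let the norm of the Banach space `X` be uniformly smooth with modulus
of convexity of power type `p`, and let `f : X → ℝ` be uniformly continuous on `X`.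
Then `Δ_n^p f → f` uniformly on `X`. -/
theorem stmt_4 {X : Type*} [NormedAddCommGroup X] [NormedSpace ℝ X] [CompleteSpace X]
    (p : ℝ) (hp : 2 ≤ p)
    (hUS : Filter.Tendsto
      (fun τ : ℝ => (sSup {r : ℝ | ∃ x y : X, ‖x‖ = 1 ∧ ‖y‖ = 1 ∧
        r = (‖x + τ • y‖ + ‖x - τ • y‖) / 2 - 1}) / τ)
      (nhdsWithin 0 (Set.Ioi (0 : ℝ))) (nhds 0))
    (hconv : ∃ C : ℝ, 0 < C ∧ ∀ ε : ℝ, 0 < ε → ε ≤ 2 →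
      ∀ x y : X, ‖x‖ = 1 → ‖y‖ = 1 → ε ≤ ‖x - y‖ → C * ε ^ p ≤ 1 - ‖x + y‖ / 2)
    (f : X → ℝ)
    (hu : UniformContinuous f) :
    TendstoUniformly (fun (n : ℕ) (x : X) => DeltaR p f n x) f Filter.atTop :=
  stmt_4_general p hp hconv f hu
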